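/- arXiv:2509.07533 — 5 statements merged into one kernel-verified Lean document; each statement's English description precedes it below -/
import Mathlib

section
/- Let k ≥ 1 and n ≥ 0. The number of bw-balanced k-ary words of length n equals Σ_{r=0}^{⌊n/2⌋} C(⌈n/2⌉, r) · C(⌊n/2⌋, r) · ⌈k/2⌉^{2r} · ⌊k/2⌋^{n−2r}. -/
/-- Black contribution of letter `h` at (1-based) index `i`. -/
def blackC (i h : ℕ) : ℕ := if Odd i then (h + 1) / 2 else h / 2

/-- White contribution of letter `h` at (1-based) index `i`. -/
def whiteC (i h : ℕ) : ℕ := if Odd i then h / 2 else (h + 1) / 2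

/-- Number of black cells in the bargraph of the word `w`. -/
def black {n : ℕ} (w : Fin n → ℕ) : ℕ := ∑ i : Fin n, blackC (i.1 + 1) (w i)

/-- Number of white cells in the bargraph of the word `w`. -/
def white {n : ℕ} (w : Fin n → ℕ) : ℕ := ∑ i : Fin n, whiteC (i.1 + 1) (w i)

open Finset

lemma count_even_range (m : ℕ) :
    ((Finset.range m).filter (fun x => x % 2 = 0)).card = (m + 1) / 2 := by
  induction m with
  | zero => simp
  | succ m ih =>
    rw [Finset.range_add_one, Finset.filter_insert]
    by_cases h : m % 2 = 0
    · rw [if_pos h, Finset.card_insert_of_notMem (by simp)]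
      omega
    · rw [if_neg h]; omega

lemma count_fin (m : ℕ) (p : ℕ → Prop) [DecidablePred p] :
    (Finset.univ.filter (fun i : Fin m => p i.1)).card
      = ((Finset.range m).filter p).card := by
  rw [Finset.card_filter, Finset.card_filter]
  exact Fin.sum_univ_eq_sum_range (fun j => if p j then 1 else 0) m

theorem stmt_3 (k n : ℕ) (hk : 1 ≤ k) :
    (Finset.univ.filter fun u : Fin n → Fin k =>
        black (fun i => (u i).1 + 1) = white (fun i => (u i).1 + 1)).card =
      ∑ r ∈ Finset.range (n / 2 + 1),
        Nat.choose ((n + 1) / 2) r * Nat.choose (n / 2) r *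
          ((k + 1) / 2) ^ (2 * r) * (k / 2) ^ (n - 2 * r) := by
  classical
  -- Step 1: rewrite the balance condition as equality of two counts
  have hiff : ∀ u : Fin n → Fin k,
      (black (fun i => (u i).1 + 1) = white (fun i => (u i).1 + 1)) ↔
      ((Finset.univ.filter fun i : Fin n => (i.1 + 1) % 2 = 1 ∧ (u i).1 % 2 = 0).card
        = (Finset.univ.filter fun i : Fin n => (i.1 + 1) % 2 = 0 ∧ (u i).1 % 2 = 0).card) := by
    intro u
    have key : black (fun i => (u i).1 + 1)
        + (Finset.univ.filter fun i : Fin n => (i.1 + 1) % 2 = 0 ∧ (u i).1 % 2 = 0).card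
        = white (fun i => (u i).1 + 1)
        + (Finset.univ.filter fun i : Fin n => (i.1 + 1) % 2 = 1 ∧ (u i).1 % 2 = 0).card := by
      rw [black, white, Finset.card_filter, Finset.card_filter, ← Finset.sum_add_distrib,
        ← Finset.sum_add_distrib]
      refine Finset.sum_congr rfl fun i _ => ?_
      simp only [blackC, whiteC, Nat.odd_iff]
      split_ifs <;> omega
    constructor <;> intro h <;> omega
  have hset : (Finset.univ.filter fun u : Fin n → Fin k =>
        black (fun i => (u i).1 + 1) = white (fun i => (u i).1 + 1))
      = Finset.univ.filter (fun u : Fin n → Fin k =>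
        (Finset.univ.filter fun i : Fin n => (i.1 + 1) % 2 = 1 ∧ (u i).1 % 2 = 0).card
          = (Finset.univ.filter fun i : Fin n => (i.1 + 1) % 2 = 0 ∧ (u i).1 % 2 = 0).card) :=
    Finset.filter_congr (fun u _ => hiff u)
  rw [hset]
  -- Step 2: fiber over the parity pattern
  set T : Finset (Fin n → Bool) := Finset.univ.filter (fun p : Fin n → Bool =>
    (Finset.univ.filter fun i : Fin n => (i.1 + 1) % 2 = 1 ∧ p i = true).card
      = (Finset.univ.filter fun i : Fin n => (i.1 + 1) % 2 = 0 ∧ p i = true).card) with hT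
  have hmap : ∀ u ∈ Finset.univ.filter (fun u : Fin n → Fin k =>
      (Finset.univ.filter fun i : Fin n => (i.1 + 1) % 2 = 1 ∧ (u i).1 % 2 = 0).card
        = (Finset.univ.filter fun i : Fin n => (i.1 + 1) % 2 = 0 ∧ (u i).1 % 2 = 0).card),
      (fun i => decide ((u i).1 % 2 = 0)) ∈ T := by
    intro u hu
    simp only [Finset.mem_filter, Finset.mem_univ, true_and] at hu
    simp only [hT, Finset.mem_filter, Finset.mem_univ, true_and, decide_eq_true_eq]
    exact hu
  rw [Finset.card_eq_sum_card_fiberwise hmap]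
  -- Step 3: compute the size of each fiber
  have hoddr : ((Finset.range k).filter (fun x => ¬ x % 2 = 0)).card = k / 2 := by
    have h1 := Finset.card_filter_add_card_filter_not
      (s := Finset.range k) (p := fun x => x % 2 = 0)
    rw [count_even_range] at h1
    simp only [Finset.card_range] at h1
    omega
  have hc : ∀ b : Bool, (Finset.univ.filter (fun x : Fin k => decide (x.1 % 2 = 0) = b)).card
      = if b = true then (k + 1) / 2 else k / 2 := by
    intro b
    cases b
    · have e : Finset.univ.filter (fun x : Fin k => decide (x.1 % 2 = 0) = false)
          = Finset.univ.filter (fun x : Fin k => ¬ (x.1 % 2 = 0)) :=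
        Finset.filter_congr (fun x _ => by simp)
      rw [e, count_fin k (fun m => ¬ m % 2 = 0), hoddr]
      simp
    · have e : Finset.univ.filter (fun x : Fin k => decide (x.1 % 2 = 0) = true)
          = Finset.univ.filter (fun x : Fin k => x.1 % 2 = 0) :=
        Finset.filter_congr (fun x _ => by simp)
      rw [e, count_fin k (fun m => m % 2 = 0), count_even_range]
      simp
  have hfiber : ∀ p ∈ T,
      ((Finset.univ.filter (fun u : Fin n → Fin k =>
        (Finset.univ.filter fun i : Fin n => (i.1 + 1) % 2 = 1 ∧ (u i).1 % 2 = 0).card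
          = (Finset.univ.filter fun i : Fin n => (i.1 + 1) % 2 = 0 ∧ (u i).1 % 2 = 0).card)).filter
          (fun u => (fun i => decide ((u i).1 % 2 = 0)) = p)).card
      = ((k + 1) / 2) ^ (Finset.univ.filter fun i : Fin n => p i = true).card
        * (k / 2) ^ (n - (Finset.univ.filter fun i : Fin n => p i = true).card) := by
    intro p hp
    have h1 : (Finset.univ.filter (fun u : Fin n → Fin k =>
        (Finset.univ.filter fun i : Fin n => (i.1 + 1) % 2 = 1 ∧ (u i).1 % 2 = 0).card
          = (Finset.univ.filter fun i : Fin n => (i.1 + 1) % 2 = 0 ∧ (u i).1 % 2 = 0).card)).filter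
          (fun u => (fun i => decide ((u i).1 % 2 = 0)) = p)
        = Finset.univ.filter (fun u : Fin n → Fin k =>
            (fun i => decide ((u i).1 % 2 = 0)) = p) := by
      ext u
      simp only [Finset.mem_filter, Finset.mem_univ, true_and]
      constructor
      · rintro ⟨_, h⟩; exact h
      · intro h
        refine ⟨?_, h⟩
        simp only [hT, Finset.mem_filter, Finset.mem_univ, true_and] at hp
        rw [← h] at hp
        simpa using hp
    have h2 : Finset.univ.filter (fun u : Fin n → Fin k =>
          (fun i => decide ((u i).1 % 2 = 0)) = p)
        = Fintype.piFinset (fun i : Fin n =>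
            Finset.univ.filter (fun x : Fin k => decide (x.1 % 2 = 0) = p i)) := by
      ext u
      simp [Fintype.mem_piFinset, funext_iff]
    rw [h1, h2, Fintype.card_piFinset]
    rw [Finset.prod_congr rfl (fun i _ => hc (p i))]
    rw [← Finset.prod_filter_mul_prod_filter_not Finset.univ (fun i : Fin n => p i = true)]
    rw [Finset.prod_congr rfl (fun i hi => if_pos (Finset.mem_filter.mp hi).2),
      Finset.prod_congr rfl (fun i hi => if_neg (Finset.mem_filter.mp hi).2)]
    rw [Finset.prod_const, Finset.prod_const]
    congr 1
    have h3 := Finset.card_filter_add_card_filter_not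
      (s := (Finset.univ : Finset (Fin n))) (p := fun i : Fin n => p i = true)
    simp only [Finset.card_univ, Fintype.card_fin] at h3
    congr 1
    omega
  rw [Finset.sum_congr rfl hfiber]
  set Apos : Finset (Fin n) := Finset.univ.filter (fun i : Fin n => (i.1 + 1) % 2 = 1) with hA
  set Bpos : Finset (Fin n) := Finset.univ.filter (fun i : Fin n => (i.1 + 1) % 2 = 0) with hB
  have hmemA : ∀ i : Fin n, i ∈ Apos ↔ (i.1 + 1) % 2 = 1 := by
    intro i; simp [hA]
  have hmemB : ∀ i : Fin n, i ∈ Bpos ↔ (i.1 + 1) % 2 = 0 := by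
    intro i; simp [hB]
  have hcardA : Apos.card = (n + 1) / 2 := by
    have e : Apos = Finset.univ.filter (fun i : Fin n => i.1 % 2 = 0) := by
      rw [hA]; exact Finset.filter_congr (fun i _ => by omega)
    rw [e, count_fin n (fun m => m % 2 = 0), count_even_range]
  have hcardB : Bpos.card = n / 2 := by
    have h1 := Finset.card_filter_add_card_filter_not
      (s := (Finset.univ : Finset (Fin n))) (p := fun i : Fin n => (i.1 + 1) % 2 = 1)
    have e : Bpos = Finset.univ.filter (fun i : Fin n => ¬ ((i.1 + 1) % 2 = 1)) := by
      rw [hB]; exact Finset.filter_congr (fun i _ => by omega)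
    rw [e]
    simp only [Finset.card_univ, Fintype.card_fin] at h1
    have := hcardA
    rw [hA] at this
    omega
  -- bijection with pairs of subsets
  rw [Finset.sum_nbij' (i := fun p : Fin n → Bool =>
        (Apos.filter (fun i => p i = true), Bpos.filter (fun i => p i = true)))
      (j := fun q : Finset (Fin n) × Finset (Fin n) => fun i => decide (i ∈ q.1 ∪ q.2))
      (t := (Apos.powerset ×ˢ Bpos.powerset).filter fun q => q.1.card = q.2.card)
      (g := fun q => ((k + 1) / 2) ^ (q.1.card + q.2.card) * (k / 2) ^ (n - (q.1.card + q.2.card)))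
      ?_ ?_ ?_ ?_ ?_]
  · -- final computation over pairs
    rw [Finset.sum_filter, Finset.sum_product]
    have hin : ∀ S : Finset (Fin n),
        (∑ Tq ∈ Bpos.powerset, if S.card = Tq.card then
            ((k + 1) / 2) ^ (S.card + Tq.card) * (k / 2) ^ (n - (S.card + Tq.card)) else 0)
        = Nat.choose (n / 2) S.card * (((k + 1) / 2) ^ (S.card + S.card) * (k / 2) ^ (n - (S.card + S.card))) := by
      intro S
      rw [← Finset.sum_filter]
      have e : Bpos.powerset.filter (fun Tq => S.card = Tq.card)
          = Finset.powersetCard S.card Bpos := by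
        rw [Finset.powersetCard_eq_filter]
        exact Finset.filter_congr (fun x _ => eq_comm)
      rw [e]
      have h4 := Finset.sum_powersetCard S.card Bpos
        (fun c => ((k + 1) / 2) ^ (S.card + c) * (k / 2) ^ (n - (S.card + c)))
      rw [h4, hcardB, smul_eq_mul]
    rw [Finset.sum_congr rfl (fun S _ => hin S)]
    rw [Finset.sum_powerset]
    have hout : ∀ j ∈ Finset.range (Apos.card + 1),
        (∑ S ∈ Finset.powersetCard j Apos,
          Nat.choose (n / 2) S.card * (((k + 1) / 2) ^ (S.card + S.card) * (k / 2) ^ (n - (S.card + S.card))))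
        = Nat.choose ((n + 1) / 2) j *
            (Nat.choose (n / 2) j * (((k + 1) / 2) ^ (j + j) * (k / 2) ^ (n - (j + j)))) := by
      intro j _
      have h5 := Finset.sum_powersetCard j Apos
        (fun c => Nat.choose (n / 2) c * (((k + 1) / 2) ^ (c + c) * (k / 2) ^ (n - (c + c))))
      rw [h5, hcardA, smul_eq_mul, mul_comm]
    rw [Finset.sum_congr rfl hout, hcardA]
    rw [show (∑ r ∈ Finset.range (n / 2 + 1),
        Nat.choose ((n + 1) / 2) r * Nat.choose (n / 2) r * ((k + 1) / 2) ^ (2 * r) * (k / 2) ^ (n - 2 * r))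
      = ∑ r ∈ Finset.range ((n + 1) / 2 + 1),
        Nat.choose ((n + 1) / 2) r * Nat.choose (n / 2) r * ((k + 1) / 2) ^ (2 * r) * (k / 2) ^ (n - 2 * r) from
      Finset.sum_subset (Finset.range_subset_range.mpr (by omega)) (fun x _ hx => by
        have hx2 : n / 2 < x := by simp only [Finset.mem_range] at hx; omega
        rw [Nat.choose_eq_zero_of_lt hx2]
        ring)]
    refine Finset.sum_congr rfl fun j _ => ?_
    have e1 : j + j = 2 * j := by ring
    rw [e1]
    ring
  · -- hi
    intro p hp
    simp only [hT, Finset.mem_filter, Finset.mem_univ, true_and] at hp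
    simp only [Finset.mem_filter, Finset.mem_product, Finset.mem_powerset]
    refine ⟨⟨Finset.filter_subset _ _, Finset.filter_subset _ _⟩, ?_⟩
    rw [hA, hB, Finset.filter_filter, Finset.filter_filter]
    exact hp
  · -- hj
    rintro ⟨S, Tq⟩ hq
    simp only [Finset.mem_filter, Finset.mem_product, Finset.mem_powerset] at hq
    obtain ⟨⟨hS, hTq⟩, hcard⟩ := hq
    simp only [hT, Finset.mem_filter, Finset.mem_univ, true_and]
    have e1 : Finset.univ.filter (fun i : Fin n =>
        (i.1 + 1) % 2 = 1 ∧ decide (i ∈ S ∪ Tq) = true) = S := by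
      ext i
      simp only [Finset.mem_filter, Finset.mem_univ, true_and, decide_eq_true_eq,
        Finset.mem_union]
      constructor
      · rintro ⟨hodd, hi | hi⟩
        · exact hi
        · have := (hmemB i).mp (hTq hi); omega
      · intro hi
        exact ⟨(hmemA i).mp (hS hi), Or.inl hi⟩
    have e2 : Finset.univ.filter (fun i : Fin n =>
        (i.1 + 1) % 2 = 0 ∧ decide (i ∈ S ∪ Tq) = true) = Tq := by
      ext i
      simp only [Finset.mem_filter, Finset.mem_univ, true_and, decide_eq_true_eq,
        Finset.mem_union]
      constructor
      · rintro ⟨heven, hi | hi⟩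
        · have := (hmemA i).mp (hS hi); omega
        · exact hi
      · intro hi
        exact ⟨(hmemB i).mp (hTq hi), Or.inr hi⟩
    rw [e1, e2, hcard]
  · -- left inverse
    intro p _
    funext i
    have hpar : (i.1 + 1) % 2 = 1 ∨ (i.1 + 1) % 2 = 0 := by omega
    cases hpi : p i with
    | false => simp [Finset.mem_union, Finset.mem_filter, hpi]
    | true =>
      simp only [Finset.mem_union, Finset.mem_filter, hpi, and_true, hmemA, hmemB,
        decide_eq_true_eq]
      omega
  · -- right inverse
    rintro ⟨S, Tq⟩ hq
    simp only [Finset.mem_filter, Finset.mem_product, Finset.mem_powerset] at hq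
    obtain ⟨⟨hS, hTq⟩, _⟩ := hq
    have r1 : Apos.filter (fun i => decide (i ∈ S ∪ Tq) = true) = S := by
      ext i
      simp only [Finset.mem_filter, decide_eq_true_eq, Finset.mem_union]
      constructor
      · rintro ⟨hiA, hi | hi⟩
        · exact hi
        · have h1 := (hmemA i).mp hiA
          have h2 := (hmemB i).mp (hTq hi)
          omega
      · intro hi
        exact ⟨hS hi, Or.inl hi⟩
    have r2 : Bpos.filter (fun i => decide (i ∈ S ∪ Tq) = true) = Tq := by
      ext i
      simp only [Finset.mem_filter, decide_eq_true_eq, Finset.mem_union]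
      constructor
      · rintro ⟨hiB, hi | hi⟩
        · have h1 := (hmemB i).mp hiB
          have h2 := (hmemA i).mp (hS hi)
          omega
        · exact hi
      · intro hi
        exact ⟨hTq hi, Or.inr hi⟩
    simp only [r1, r2]
  · -- weights agree
    intro p _
    have hdisj : Disjoint (Apos.filter (fun i => p i = true)) (Bpos.filter (fun i => p i = true)) := by
      rw [Finset.disjoint_left]
      intro i hi1 hi2
      have h1 := (hmemA i).mp (Finset.mem_filter.mp hi1).1
      have h2 := (hmemB i).mp (Finset.mem_filter.mp hi2).1
      omega
    have hsplit : (Finset.univ.filter (fun i : Fin n => p i = true)).card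
        = (Apos.filter (fun i => p i = true)).card + (Bpos.filter (fun i => p i = true)).card := by
      rw [← Finset.card_union_of_disjoint hdisj]
      congr 1
      ext i
      simp only [Finset.mem_filter, Finset.mem_univ, true_and, Finset.mem_union, hmemA, hmemB]
      constructor
      · intro h
        rcases (by omega : (i.1 + 1) % 2 = 1 ∨ (i.1 + 1) % 2 = 0) with h' | h'
        · exact Or.inl ⟨h', h⟩
        · exact Or.inr ⟨h', h⟩
      · rintro (⟨_, h⟩ | ⟨_, h⟩) <;> exact h
    rw [hsplit]
end

section
/- Let k be even and n ≥ 0. The number of bw-balanced k-ary words of length n equals (k/2)^n · C(n, ⌊n/2⌋). -/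
/-!
Position `i` (counted from `0`) contributes `±(h mod 2)` to `black − white` for a letter `h`, with
sign `+` for even and `−` for odd `i`; hence `black w + ⌊n/2⌋ = white w + #{i | h_i ≢ i (mod 2)}`,
and `w` is balanced iff exactly `⌊n/2⌋` positions carry a letter of the "wrong" parity. For even `k`
every position has `k/2` letters of either parity, so choosing those positions and then the letters
gives `C(n, ⌊n/2⌋) · (k/2)^n` words.
-/

open Finset

section Hits

variable {ι β : Type*} [Fintype ι] [DecidableEq ι] [Fintype β] [DecidableEq β]

def hits (A : ι → Finset β) (u : ι → β) : Finset ι := {i | u i ∈ A i}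

lemma filter_hits_eq_piFinset (A : ι → Finset β) (s : Finset ι) :
    ({u | hits A u = s} : Finset (ι → β)) =
      Fintype.piFinset fun i => if i ∈ s then A i else (A i)ᶜ := by
  ext u
  simp only [hits, mem_filter, mem_univ, true_and, Fintype.mem_piFinset, Finset.ext_iff]
  refine forall_congr' fun i => ?_
  split_ifs with hi <;> simp [hi]

lemma card_filter_hits_eq (A : ι → Finset β) {a b : ℕ} (ha : ∀ i, #(A i) = a)
    (hb : ∀ i, #(A i)ᶜ = b) (s : Finset ι) :
    #{u | hits A u = s} = a ^ #s * b ^ (Fintype.card ι - #s) := by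
  rw [filter_hits_eq_piFinset, Fintype.card_piFinset]
  simp only [apply_ite card, ha, hb]
  rw [prod_ite, prod_const, prod_const, filter_mem_eq_inter, univ_inter, filter_not,
    filter_mem_eq_inter, univ_inter, card_univ_sdiff]

theorem card_filter_card_hits_eq (A : ι → Finset β) {a b : ℕ} (ha : ∀ i, #(A i) = a)
    (hb : ∀ i, #(A i)ᶜ = b) (r : ℕ) :
    #{u | #(hits A u) = r} = (Fintype.card ι).choose r * a ^ r * b ^ (Fintype.card ι - r) := by
  rw [card_eq_sum_card_fiberwise (f := hits A) (t := powersetCard r univ)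
    (fun u hu => by simpa using hu)]
  have fiber : ∀ s ∈ powersetCard r (univ : Finset ι),
      #{u ∈ {u | #(hits A u) = r} | hits A u = s} = a ^ r * b ^ (Fintype.card ι - r) := by
    intro s hs
    rw [mem_powersetCard] at hs
    rw [filter_filter, ← hs.2, ← card_filter_hits_eq A ha hb s]
    congr 1
    exact filter_congr fun u _ => ⟨And.right, fun h => ⟨h ▸ rfl, h⟩⟩
  rw [sum_congr rfl fiber, sum_const, card_powersetCard, card_univ, smul_eq_mul, mul_assoc]

end Hits

lemma card_filter_mod_two_eq {k j : ℕ} (hk : Even k) (hj : j < 2) :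
    #{x : Fin k | x.1 % 2 = j} = k / 2 := by
  have h := Nat.count_modEq_card k (r := 2) two_pos j
  rw [Nat.count_eq_card_filter_range] at h
  simp only [Nat.ModEq, Nat.mod_eq_of_lt hj, Nat.even_iff.mp hk, not_lt_zero, ↓reduceIte,
    add_zero] at h
  rw [← h, ← card_map Fin.valEmbedding]
  congr 1
  ext x
  simp only [mem_map, mem_filter, mem_univ, true_and, Fin.valEmbedding_apply, mem_range]
  exact ⟨fun ⟨a, ha, hax⟩ => hax ▸ ⟨a.2, ha⟩, fun ⟨hx, h⟩ => ⟨⟨x, hx⟩, h, rfl⟩⟩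

lemma sum_range_mod_two (n : ℕ) : ∑ i ∈ range n, i % 2 = n / 2 := by
  induction n with
  | zero => rfl
  | succ n ih => rw [sum_range_succ, ih]; omega

lemma blackC_succ_add_mod_two (i h : ℕ) :
    blackC (i + 1) h + i % 2 = whiteC (i + 1) h + (h + i) % 2 := by
  simp only [blackC, whiteC, Nat.odd_add_one, Nat.odd_iff]
  split_ifs <;> omega

lemma black_add_half_eq {n : ℕ} (w : Fin n → ℕ) :
    black w + n / 2 = white w + ∑ i : Fin n, (w i + i) % 2 := by
  rw [← sum_range_mod_two, ← Fin.sum_univ_eq_sum_range, black, white, ← sum_add_distrib,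
    ← sum_add_distrib]
  exact sum_congr rfl fun i _ => blackC_succ_add_mod_two i (w i)

lemma black_eq_white_iff {n : ℕ} (w : Fin n → ℕ) :
    black w = white w ↔ ∑ i : Fin n, (w i + i) % 2 = n / 2 := by
  have := black_add_half_eq w
  omega

lemma sum_mod_two_eq_card_hits {n k : ℕ} (u : Fin n → Fin k) :
    ∑ i : Fin n, ((u i).1 + 1 + i) % 2 =
      #(hits (fun i => {x : Fin k | x.1 % 2 = i.1 % 2}) u) := by
  rw [hits, card_filter]
  refine sum_congr rfl fun i _ => ?_
  simp only [mem_filter, mem_univ, true_and]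
  split_ifs <;> omega

theorem stmt_4 (k n : ℕ) (hk : Even k) :
    (Finset.univ.filter fun u : Fin n → Fin k =>
        black (fun i => (u i).1 + 1) = white (fun i => (u i).1 + 1)).card =
      (k / 2) ^ n * Nat.choose n (n / 2) := by
  set A : Fin n → Finset (Fin k) := fun i => {x | x.1 % 2 = i.1 % 2}
  have hA : ∀ i, #(A i) = k / 2 := fun i => card_filter_mod_two_eq hk (Nat.mod_lt _ two_pos)
  have hAc : ∀ i, #(A i)ᶜ = k / 2 := fun i => by
    rw [card_compl, hA, Fintype.card_fin]
    have := Nat.even_iff.mp hk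
    omega
  calc _ = #{u | #(hits A u) = n / 2} := by
        simp_rw [black_eq_white_iff, sum_mod_two_eq_card_hits]
        rfl
    _ = n.choose (n / 2) * (k / 2) ^ (n / 2) * (k / 2) ^ (n - n / 2) := by
        simpa using card_filter_card_hits_eq A hA hAc (n / 2)
    _ = _ := by rw [mul_assoc, ← pow_add, Nat.add_sub_cancel' (Nat.div_le_self n 2), mul_comm]
end

section
/- Let n ≥ 1 and set a = ⌈n/2⌉, b = ⌊n/2⌋. Then Σ_{π ∈ S_n} x^{black(π)} y^{white(π)} = (xy)^{⌊n²/4⌋} · b! · a! · Σ_{r=0}^{b} C(a, r) · C(b, r) · x^{a−r} · y^{r}, where black(π) = Σ_i b_i(π_i) with b_i(h) = ⌈h/2⌉ for odd i and ⌊h/2⌋ for even i, and white(π) = Σ_i v_i(π_i) with v_i(h) = ⌊h/2⌋ for odd i and ⌈h/2⌉ for even i. -/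
open Finset
open scoped Nat

section Subsets

variable {α : Type*} [Fintype α] [DecidableEq α]

theorem card_filter_card_inter_card_sdiff (A : Finset α) {q : ℕ} {p : ℕ × ℕ}
    (hp : p ∈ antidiagonal q) :
    #{P ∈ powersetCard q univ | (#(P ∩ A), #(P \ A)) = p} = (#A).choose p.1 * (#Aᶜ).choose p.2 := by
  rw [← card_powersetCard, ← card_powersetCard, ← card_product]
  have hsplit {Q₁ Q₂ : Finset α} (h₁ : Q₁ ⊆ A) (h₂ : Q₂ ⊆ Aᶜ) :
      (Q₁ ∪ Q₂) ∩ A = Q₁ ∧ (Q₁ ∪ Q₂) \ A = Q₂ := by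
    rw [subset_iff] at h₁ h₂
    constructor <;> ext a <;> grind [mem_compl]
  refine card_nbij' (fun P => (P ∩ A, P \ A)) (fun Q => Q.1 ∪ Q.2) ?_ ?_ ?_ ?_
  · intro P hP
    simp_all [Prod.ext_iff, subset_iff]
  · rintro ⟨Q₁, Q₂⟩ hQ
    simp only [coe_product, Set.mem_prod, mem_coe, mem_powersetCard] at hQ
    obtain ⟨⟨h₁, c₁⟩, h₂, c₂⟩ := hQ
    obtain ⟨e₁, e₂⟩ := hsplit h₁ h₂
    have hdisj : Disjoint Q₁ Q₂ :=
      disjoint_of_subset_left h₁ (disjoint_of_subset_right h₂ disjoint_compl_right)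
    simp only [coe_filter, mem_powersetCard_univ, Set.mem_ofPred_eq, e₁, e₂, c₁, c₂,
      card_union_of_disjoint hdisj, HasAntidiagonal.mem_antidiagonal.mp hp, and_true]
  · intro P _
    exact sup_inf_sdiff P A
  · rintro ⟨Q₁, Q₂⟩ hQ
    simp only [coe_product, Set.mem_prod, mem_coe, mem_powersetCard] at hQ
    obtain ⟨e₁, e₂⟩ := hsplit hQ.1.1 hQ.2.1
    simp [e₁, e₂]

theorem sum_powersetCard_pow_card_inter_mul_pow_card_sdiff {R : Type*} [CommSemiring R]
    (A : Finset α) (q : ℕ) (x y : R) :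
    ∑ P ∈ powersetCard q univ, x ^ #(P ∩ A) * y ^ #(P \ A) =
      ∑ p ∈ antidiagonal q, ((#A).choose p.1 * (#Aᶜ).choose p.2 : R) * x ^ p.1 * y ^ p.2 := by
  have hmaps : ∀ P ∈ powersetCard q univ, (#(P ∩ A), #(P \ A)) ∈ antidiagonal q := by
    intro P hP
    rw [HasAntidiagonal.mem_antidiagonal, card_inter_add_card_sdiff, (mem_powersetCard_univ.mp hP)]
  rw [← sum_fiberwise_of_maps_to hmaps]
  refine sum_congr rfl fun p hp => ?_
  have hfiber : ∀ P ∈ ({P ∈ powersetCard q univ | (#(P ∩ A), #(P \ A)) = p} : Finset (Finset α)),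
      x ^ #(P ∩ A) * y ^ #(P \ A) = x ^ p.1 * y ^ p.2 := by
    intro P hP
    rw [← (mem_filter.mp hP).2]
  rw [sum_congr rfl hfiber, sum_const, card_filter_card_inter_card_sdiff A hp, nsmul_eq_mul]
  push_cast
  ring

end Subsets

namespace Equiv.Perm

variable {α : Type*}

def subtypeIffEquivProd (p q : α → Prop) [DecidablePred p] [DecidablePred q] :
    {σ : Perm α // ∀ a, p a ↔ q (σ a)} ≃
      ({a // p a} ≃ {a // q a}) × ({a // ¬p a} ≃ {a // ¬q a}) where
  toFun σ := (σ.1.subtypeEquiv σ.2, σ.1.subtypeEquiv fun a => not_congr (σ.2 a))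
  invFun ef := ⟨Equiv.subtypeCongr ef.1 ef.2, fun a => by
    by_cases h : p a
    · simpa [Equiv.subtypeCongr, sumCompl_symm_apply_of_pos h, h] using (ef.1 ⟨a, h⟩).2
    · simpa [Equiv.subtypeCongr, sumCompl_symm_apply_of_neg h, h] using (ef.2 ⟨a, h⟩).2⟩
  left_inv σ := by
    ext a
    by_cases h : p a
    · simp [Equiv.subtypeCongr, sumCompl_symm_apply_of_pos h]
    · simp [Equiv.subtypeCongr, sumCompl_symm_apply_of_neg h]
  right_inv ef := by
    ext ⟨a, h⟩
    · simp [Equiv.subtypeCongr, sumCompl_symm_apply_of_pos h]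
    · simp [Equiv.subtypeCongr, sumCompl_symm_apply_of_neg h]

variable [Fintype α] [DecidableEq α]

theorem card_filter_apply_mem (σ : Perm α) (B : Finset α) : #({i | σ i ∈ B} : Finset α) = #B :=
  card_nbij' σ σ.symm (fun _ => by simp) (fun _ => by simp) (fun _ _ => by simp)
    (fun _ _ => by simp)

theorem card_filter_preimage_eq {B P : Finset α} (h : #P = #B) :
    #{σ : Perm α | ({i | σ i ∈ B} : Finset α) = P} = (#B)! * (#Bᶜ)! := by
  have hiff (σ : Perm α) : ({i | σ i ∈ B} : Finset α) = P ↔ ∀ a, a ∈ P ↔ σ a ∈ B := by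
    simp [Finset.ext_iff, iff_comm]
  have hin : Fintype.card {a // a ∈ P} = Fintype.card {a // a ∈ B} := by simp [h]
  have hout : Fintype.card {a // a ∉ P} = Fintype.card {a // a ∉ B} := by
    simp [Fintype.card_subtype_compl, h]
  rw [filter_congr fun σ _ => hiff σ, ← Fintype.card_subtype,
    Fintype.card_congr (subtypeIffEquivProd _ _), Fintype.card_prod,
    Fintype.card_equiv (Fintype.equivOfCardEq hin), Fintype.card_equiv (Fintype.equivOfCardEq hout),
    hin, hout, Fintype.card_subtype_compl, Fintype.card_coe, card_compl]

theorem sum_preimage {M : Type*} [AddCommMonoid M] (B : Finset α) (F : Finset α → M) :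
    ∑ σ : Perm α, F {i | σ i ∈ B} =
      ((#B)! * (#Bᶜ)!) • ∑ P ∈ powersetCard #B univ, F P := by
  have hmaps (σ : Perm α) (_ : σ ∈ univ) : ({i | σ i ∈ B} : Finset α) ∈ powersetCard #B univ := by
    rw [mem_powersetCard_univ, card_filter_apply_mem]
  rw [← sum_fiberwise_of_maps_to hmaps, smul_sum]
  refine sum_congr rfl fun P hP => ?_
  rw [sum_congr rfl fun σ hσ => by rw [(mem_filter.mp hσ).2], sum_const,
    card_filter_preimage_eq (mem_powersetCard_univ.mp hP)]

theorem sum_pow_card_filter_mul_pow_card_filter {R : Type*} [CommSemiring R] (A B : Finset α)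
    (x y : R) :
    ∑ σ : Perm α, x ^ #{i ∈ A | σ i ∈ B} * y ^ #{i ∈ Aᶜ | σ i ∈ B} =
      (#B)! * (#Bᶜ)! *
        ∑ p ∈ antidiagonal #B, ((#A).choose p.1 * (#Aᶜ).choose p.2 : R) * x ^ p.1 * y ^ p.2 := by
  have hinter (σ : Perm α) : {i ∈ A | σ i ∈ B} = ({i | σ i ∈ B} : Finset α) ∩ A := by
    ext i; simp [and_comm]
  have hsdiff (σ : Perm α) : {i ∈ Aᶜ | σ i ∈ B} = ({i | σ i ∈ B} : Finset α) \ A := by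
    ext i; simp [and_comm]
  simp_rw [hinter, hsdiff]
  rw [sum_preimage B (fun P => x ^ #(P ∩ A) * y ^ #(P \ A)),
    sum_powersetCard_pow_card_inter_mul_pow_card_sdiff, nsmul_eq_mul, Nat.cast_mul]

end Equiv.Perm

theorem sum_antidiagonal_choose_mul_choose {R : Type*} [CommSemiring R] {a b : ℕ} (hba : b ≤ a)
    (x y : R) :
    ∑ p ∈ antidiagonal a, (a.choose p.1 * b.choose p.2 : R) * x ^ p.1 * y ^ p.2 =
      ∑ r ∈ range (b + 1), (a.choose r : R) * b.choose r * x ^ (a - r) * y ^ r := by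
  calc ∑ p ∈ antidiagonal a, (a.choose p.1 * b.choose p.2 : R) * x ^ p.1 * y ^ p.2
      = ∑ r ∈ range (a + 1), (a.choose (a - r) * b.choose r : R) * x ^ (a - r) * y ^ r := by
        rw [← Nat.sum_antidiagonal_swap]
        exact Nat.sum_antidiagonal_eq_sum_range_succ
          (fun r k => (a.choose k * b.choose r : R) * x ^ k * y ^ r) a
    _ = ∑ r ∈ range (a + 1), (a.choose r : R) * b.choose r * x ^ (a - r) * y ^ r :=
        sum_congr rfl fun r hr => by rw [Nat.choose_symm (Nat.lt_succ_iff.mp (mem_range.mp hr))]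
    _ = ∑ r ∈ range (b + 1), (a.choose r : R) * b.choose r * x ^ (a - r) * y ^ r := by
        refine (sum_subset (range_subset_range.mpr (by omega)) fun r _ hr => ?_).symm
        rw [Nat.choose_eq_zero_of_lt (n := b) (by simpa using hr)]
        simp

-- `i ∈ evens n` says that the 1-based position `i + 1` is odd; for a letter `π i ∈ evens n`
-- says that the letter `π i + 1` of the word is odd.
def evens (n : ℕ) : Finset (Fin n) := {i | Even (i : ℕ)}

theorem mem_evens {n : ℕ} {i : Fin n} : i ∈ evens n ↔ Even (i : ℕ) := by
  simp [evens]

theorem card_evens (n : ℕ) : #(evens n) = (n + 1) / 2 := by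
  rw [evens, card_filter, Fin.sum_univ_eq_sum_range (fun i => if Even i then 1 else 0)]
  induction n with
  | zero => rfl
  | succ n ih =>
    rw [sum_range_succ, ih]
    split_ifs with h
    · obtain ⟨k, rfl⟩ := h; omega
    · obtain ⟨k, rfl⟩ := Nat.not_even_iff_odd.mp h; omega

theorem card_compl_evens (n : ℕ) : #(evens n)ᶜ = n / 2 := by
  rw [card_compl, card_evens, Fintype.card_fin]
  omega

theorem sum_range_add_one_div_two (n : ℕ) : ∑ j ∈ range n, (j + 1) / 2 = n ^ 2 / 4 := by
  induction n with
  | zero => rfl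
  | succ n ih =>
    rw [sum_range_succ, ih]
    obtain ⟨k, rfl | rfl⟩ := Nat.even_or_odd' n
    · rw [show (2 * k) ^ 2 = 4 * (k * k) by ring,
        show (2 * k + 1) ^ 2 = 4 * (k * k + k) + 1 by ring]
      omega
    · rw [show (2 * k + 1) ^ 2 = 4 * (k * k + k) + 1 by ring,
        show (2 * k + 1 + 1) ^ 2 = 4 * (k * k + 2 * k + 1) by ring]
      omega

theorem blackC_add_one_add_one (i j : ℕ) :
    blackC (i + 1) (j + 1) = (j + 1) / 2 + if Even i ∧ Even j then 1 else 0 := by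
  rcases Nat.even_or_odd' i with ⟨k, rfl | rfl⟩ <;>
    rcases Nat.even_or_odd' j with ⟨l, rfl | rfl⟩ <;>
      simp [blackC, Nat.odd_add_one, parity_simps] <;> omega

theorem whiteC_add_one_add_one (i j : ℕ) :
    whiteC (i + 1) (j + 1) = (j + 1) / 2 + if ¬Even i ∧ Even j then 1 else 0 := by
  rcases Nat.even_or_odd' i with ⟨k, rfl | rfl⟩ <;>
    rcases Nat.even_or_odd' j with ⟨l, rfl | rfl⟩ <;>
      simp [whiteC, Nat.odd_add_one, parity_simps] <;> omega

theorem black_perm_eq {n : ℕ} (π : Equiv.Perm (Fin n)) :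
    black (fun i => (π i).1 + 1) = n ^ 2 / 4 + #{i ∈ evens n | π i ∈ evens n} := by
  simp only [black, blackC_add_one_add_one, sum_add_distrib, sum_boole, Nat.cast_id, mem_evens]
  rw [Equiv.sum_comp π (fun j => ((j : ℕ) + 1) / 2),
    Fin.sum_univ_eq_sum_range (fun j => (j + 1) / 2),
    sum_range_add_one_div_two, evens, filter_filter]

theorem white_perm_eq {n : ℕ} (π : Equiv.Perm (Fin n)) :
    white (fun i => (π i).1 + 1) = n ^ 2 / 4 + #{i ∈ (evens n)ᶜ | π i ∈ evens n} := by
  simp only [white, whiteC_add_one_add_one, sum_add_distrib, sum_boole, Nat.cast_id, mem_evens]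
  rw [Equiv.sum_comp π (fun j => ((j : ℕ) + 1) / 2),
    Fin.sum_univ_eq_sum_range (fun j => (j + 1) / 2),
    sum_range_add_one_div_two, evens, compl_filter, filter_filter]

theorem stmt_10_general (n : ℕ) (R : Type*) [CommRing R] (x y : R) :
    ∑ π : Equiv.Perm (Fin n),
        x ^ black (fun i => (π i).1 + 1) * y ^ white (fun i => (π i).1 + 1) =
      (x * y) ^ (n ^ 2 / 4) * (n / 2).factorial * ((n + 1) / 2).factorial *
        ∑ r ∈ Finset.range (n / 2 + 1),
          (Nat.choose ((n + 1) / 2) r : R) * Nat.choose (n / 2) r *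
            x ^ ((n + 1) / 2 - r) * y ^ r := by
  have hsplit (π : Equiv.Perm (Fin n)) :
      x ^ black (fun i => (π i).1 + 1) * y ^ white (fun i => (π i).1 + 1) =
        (x * y) ^ (n ^ 2 / 4) *
          (x ^ #{i ∈ evens n | π i ∈ evens n} * y ^ #{i ∈ (evens n)ᶜ | π i ∈ evens n}) := by
    rw [black_perm_eq, white_perm_eq]
    ring
  rw [sum_congr rfl fun π _ => hsplit π, ← mul_sum,
    Equiv.Perm.sum_pow_card_filter_mul_pow_card_filter,
    card_compl_evens, card_evens, sum_antidiagonal_choose_mul_choose (by omega)]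
  ring

theorem stmt_10 (n : ℕ) (hn : 1 ≤ n) (R : Type*) [CommRing R] (x y : R) :
    ∑ π : Equiv.Perm (Fin n),
        x ^ black (fun i => (π i).1 + 1) * y ^ white (fun i => (π i).1 + 1) =
      (x * y) ^ (n ^ 2 / 4) * (n / 2).factorial * ((n + 1) / 2).factorial *
        ∑ r ∈ Finset.range (n / 2 + 1),
          (Nat.choose ((n + 1) / 2) r : R) * Nat.choose (n / 2) r *
            x ^ ((n + 1) / 2 - r) * y ^ r :=
  stmt_10_general n R x y
end

section
/- Let n ≥ 0 with ⌈n/2⌉ even. The number of permutations π of {1,...,n} with black(π) = white(π) equals ⌊n/2⌋! · ⌈n/2⌉! · C(⌈n/2⌉, ⌈n/2⌉/2) · C(⌊n/2⌋, ⌈n/2⌉/2). -/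
/-!
Only odd letters contribute unequally: an odd letter gives its extra cell to black at an odd
position and to white at an even one. Let `s` be the set of odd positions; it has `m = ⌈n/2⌉`
elements, as many as there are odd letters. If `j` odd letters sit in `s`, the other `m - j` sit
outside, so black − white = `j - (m - j)` and balance means `j = m / 2`. Permutations with a
given `j` are counted through the image `A` of `s` (read on values): `A` meets `s` in `j` points
and `sᶜ` in `m - j`, and the permutations carrying `s` onto `A` are the pairs of bijections
`s ≃ A`, `sᶜ ≃ Aᶜ`.
-/

open Finset Equiv

section

variable {α : Type*} [Fintype α] [DecidableEq α]

theorem card_filter_card_inter_card_sdiff_s11 (s : Finset α) (j l : ℕ) :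
    #{A : Finset α | #(A ∩ s) = j ∧ #(A \ s) = l} = (#s).choose j * (#sᶜ).choose l := by
  have split {B C : Finset α} (hB : B ⊆ s) (hC : C ⊆ sᶜ) :
      (B ∪ C) ∩ s = B ∧ (B ∪ C) \ s = C := by
    constructor <;> ext x <;> grind [mem_compl]
  rw [← card_powersetCard, ← card_powersetCard, ← card_product]
  refine card_nbij' (fun A => (A ∩ s, A \ s)) (fun p => p.1 ∪ p.2) ?_ ?_
    (fun A _ => sup_inf_sdiff A s) ?_
  · intro A hA
    simp_all [mem_powersetCard, inter_subset_right]
  all_goals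
    rintro ⟨B, C⟩ h
    simp only [coe_product, Set.mem_prod, mem_coe, mem_powersetCard] at h
    simp_all [split h.1.1 h.2.1]

def Equiv.Perm.mapsOntoEquiv (s A : Finset α) :
    {π : Perm α // ∀ x, x ∈ s ↔ π x ∈ A} ≃ (s ≃ A) × ({x // x ∉ s} ≃ {x // x ∉ A}) where
  toFun π := (π.1.subtypeEquiv π.2, π.1.subtypeEquiv fun x => not_congr (π.2 x))
  invFun p := ⟨Equiv.subtypeCongr p.1 p.2, fun x => by
    by_cases hx : x ∈ s <;>
      simp [Equiv.subtypeCongr, sumCompl_symm_apply_of_pos, sumCompl_symm_apply_of_neg, hx,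
        (p.2 ⟨x, _⟩).2]⟩
  left_inv π := by
    ext x
    by_cases hx : x ∈ s <;>
      simp [Equiv.subtypeCongr, sumCompl_symm_apply_of_pos, sumCompl_symm_apply_of_neg, hx]
  right_inv p := by
    ext x
    · simp [Equiv.subtypeCongr, sumCompl_symm_apply_of_pos x.2]
    · simp [Equiv.subtypeCongr, sumCompl_symm_apply_of_neg x.2]

theorem card_perm_mapsOnto {s A : Finset α} (h : #s = #A) :
    #{π : Perm α | ∀ x, x ∈ s ↔ π x ∈ A} = (#s).factorial * (#sᶜ).factorial := by
  have hc : Fintype.card {x // x ∉ s} = Fintype.card {x // x ∉ A} := by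
    simp [Fintype.card_subtype_compl, h]
  rw [← Fintype.card_subtype, Fintype.card_congr (Perm.mapsOntoEquiv s A), Fintype.card_prod,
    Fintype.card_equiv (s.equivOfCardEq h), Fintype.card_equiv (Fintype.equivOfCardEq hc),
    Fintype.card_coe, Fintype.card_subtype_compl, Fintype.card_coe, card_compl]

theorem card_perm_filter_card_filter_mem (s : Finset α) {j : ℕ} (hj : j ≤ #s) :
    #{π : Perm α | #{x ∈ s | π x ∈ s} = j} =
      (#s).choose j * (#sᶜ).choose (#s - j) * ((#s).factorial * (#sᶜ).factorial) := by
  have map_eq_iff (π : Perm α) (A : Finset α) :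
      s.map π.toEmbedding = A ↔ ∀ x, x ∈ s ↔ π x ∈ A := by
    rw [Finset.ext_iff, ← π.forall_congr_right]
    simp
  have card_filter_mem (π : Perm α) : #{x ∈ s | π x ∈ s} = #(s.map π.toEmbedding ∩ s) := by
    rw [← card_map π.toEmbedding, map_filter]
    congr 1
    ext y
    simp [and_comm]
  rw [card_eq_sum_card_fiberwise (f := fun π => s.map π.toEmbedding)
    (t := {A | #(A ∩ s) = j ∧ #(A \ s) = #s - j})]
  · rw [← card_filter_card_inter_card_sdiff_s11, ← smul_eq_mul, ← sum_const]
    refine sum_congr rfl fun A hA => ?_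
    obtain ⟨hAs, hAsc⟩ := (mem_filter.1 hA).2
    have hA_card := card_inter_add_card_sdiff A s
    rw [filter_filter, ← card_perm_mapsOnto (A := A) (by omega)]
    congr 1
    ext π
    simp only [mem_filter, mem_univ, true_and, ← map_eq_iff]
    exact and_iff_right_of_imp fun h => by rw [card_filter_mem, h, hAs]
  · intro π hπ
    simp only [mem_coe, mem_filter, mem_univ, true_and] at hπ ⊢
    have h_card := card_inter_add_card_sdiff (s.map π.toEmbedding) s
    rw [card_map] at h_card
    rw [card_filter_mem] at hπ
    omega

end

theorem Nat.count_even (n : ℕ) : Nat.count Even n = (n + 1) / 2 := by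
  induction n with
  | zero => rfl
  | succ n ih =>
    rw [Nat.count_succ, ih]
    split_ifs <;> grind

/-- Indices are 0-based: these are the odd positions of a word. -/
def evenPositions (n : ℕ) : Finset (Fin n) := {i | Even (i : ℕ)}

theorem card_evenPositions (n : ℕ) : #(evenPositions n) = (n + 1) / 2 := by
  rw [← Nat.count_even, Nat.count_eq_card_filter_range]
  exact card_bij (fun i _ => i.1) (by simp [evenPositions]) (fun _ _ _ _ => Fin.ext)
    fun k hk => by
      simp only [mem_filter, mem_range] at hk
      exact ⟨⟨k, hk.1⟩, by simpa [evenPositions] using hk.2, rfl⟩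

theorem blackC_add_eq_whiteC_add (i h : ℕ) :
    blackC (i + 1) h + (if ¬Even i ∧ Odd h then 1 else 0) =
      whiteC (i + 1) h + (if Even i ∧ Odd h then 1 else 0) := by
  unfold blackC whiteC
  simp only [Nat.odd_iff, Nat.even_iff]
  split_ifs <;> omega

theorem black_add_card_eq_white_add_card {n : ℕ} (w : Fin n → ℕ) :
    black w + #{i : Fin n | ¬Even (i : ℕ) ∧ Odd (w i)} =
      white w + #{i : Fin n | Even (i : ℕ) ∧ Odd (w i)} := by
  simp only [black, white, card_filter, ← sum_add_distrib]
  exact sum_congr rfl fun i _ => blackC_add_eq_whiteC_add i (w i)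

theorem black_eq_white_iff_s11 {n : ℕ} (h : Even ((n + 1) / 2)) (π : Perm (Fin n)) :
    black (fun i => (π i).1 + 1) = white (fun i => (π i).1 + 1) ↔
      #{i ∈ evenPositions n | π i ∈ evenPositions n} = (n + 1) / 2 / 2 := by
  have balance := black_add_card_eq_white_add_card fun i => (π i).1 + 1
  have split : #{i : Fin n | ¬Even (i : ℕ) ∧ Even (π i : ℕ)} +
      #{i : Fin n | Even (i : ℕ) ∧ Even (π i : ℕ)} = (n + 1) / 2 := by
    rw [← card_union_of_disjoint (disjoint_filter.2 fun _ _ h h' => h.1 h'.1),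
      ← card_evenPositions]
    exact card_equiv π fun i => by
      simp only [evenPositions, mem_union, mem_filter, mem_univ, true_and]; tauto
  simp only [evenPositions, filter_filter, mem_filter, mem_univ, true_and, Nat.odd_add_one,
    Nat.not_odd_iff_even] at balance ⊢
  obtain ⟨t, ht⟩ := h
  omega

theorem stmt_11 (n : ℕ) (h : Even ((n + 1) / 2)) :
    (Finset.univ.filter fun π : Equiv.Perm (Fin n) =>
        black (fun i => (π i).1 + 1) = white (fun i => (π i).1 + 1)).card =
      (n / 2).factorial * ((n + 1) / 2).factorial *
        Nat.choose ((n + 1) / 2) (((n + 1) / 2) / 2) *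
        Nat.choose (n / 2) (((n + 1) / 2) / 2) := by
  have hcompl : #(evenPositions n)ᶜ = n / 2 := by
    rw [card_compl, card_evenPositions, Fintype.card_fin]; omega
  rw [filter_congr fun π _ => black_eq_white_iff_s11 h π,
    card_perm_filter_card_filter_mem _ (by rw [card_evenPositions]; omega), card_evenPositions,
    hcompl, show (n + 1) / 2 - (n + 1) / 2 / 2 = (n + 1) / 2 / 2 by grind]
  ring
end

section
/- Let π be a permutation of {1,...,n}. Then black(π) = white(π) if and only if the number of indices i ∈ {1,...,n} with i − π(i) odd equals ⌈n/2⌉. -/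
lemma range_even_card (n : ℕ) :
    (∑ i ∈ Finset.range n, if i % 2 = 0 then 1 else 0) = (n + 1) / 2 := by
  induction n with
  | zero => simp
  | succ n ih => rw [Finset.sum_range_succ, ih]; split <;> omega

theorem stmt_13 (n : ℕ) (π : Equiv.Perm (Fin n)) :
    black (fun i => (π i).1 + 1) = white (fun i => (π i).1 + 1) ↔
      (Finset.univ.filter fun i : Fin n =>
          Odd ((i.1 + 1 : ℤ) - ((π i).1 + 1))).card = (n + 1) / 2 := by
  have hp : (∑ i : Fin n, if i.1 % 2 = 0 then 1 else 0) = (n + 1) / 2 := by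
    rw [Fin.sum_univ_eq_sum_range (fun i => if i % 2 = 0 then 1 else 0)]
    exact range_even_card n
  have hq : (∑ i : Fin n, if (π i).1 % 2 = 0 then 1 else 0) = (n + 1) / 2 := by
    rw [Equiv.sum_comp π (fun i : Fin n => if i.1 % 2 = 0 then 1 else 0)]
    exact hp
  have h3 : (∑ i : Fin n, if i.1 % 2 = 0 ∧ (π i).1 % 2 = 0 then 1 else 0)
      + (∑ i : Fin n, if ¬ i.1 % 2 = 0 ∧ (π i).1 % 2 = 0 then 1 else 0)
      = ∑ i : Fin n, if (π i).1 % 2 = 0 then 1 else 0 := by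
    rw [← Finset.sum_add_distrib]
    refine Finset.sum_congr rfl fun i _ => ?_
    by_cases h1 : i.1 % 2 = 0 <;> by_cases h2 : (π i).1 % 2 = 0 <;>
      simp [h1, h2]
  have h4 : (∑ i : Fin n, if i.1 % 2 = 0 ∧ (π i).1 % 2 = 0 then 1 else 0)
      + (∑ i : Fin n, if i.1 % 2 = 0 ∧ ¬ (π i).1 % 2 = 0 then 1 else 0)
      = ∑ i : Fin n, if i.1 % 2 = 0 then 1 else 0 := by
    rw [← Finset.sum_add_distrib]
    refine Finset.sum_congr rfl fun i _ => ?_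
    by_cases h1 : i.1 % 2 = 0 <;> by_cases h2 : (π i).1 % 2 = 0 <;>
      simp [h1, h2]
  have h5 : black (fun i => (π i).1 + 1)
      + (∑ i : Fin n, if ¬ i.1 % 2 = 0 ∧ (π i).1 % 2 = 0 then 1 else 0)
      = white (fun i => (π i).1 + 1)
      + (∑ i : Fin n, if i.1 % 2 = 0 ∧ (π i).1 % 2 = 0 then 1 else 0) := by
    unfold black white
    rw [← Finset.sum_add_distrib, ← Finset.sum_add_distrib]
    refine Finset.sum_congr rfl fun i _ => ?_
    simp only [blackC, whiteC, Nat.odd_iff]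
    split_ifs <;> omega
  have h6 : (Finset.univ.filter fun i : Fin n =>
        Odd ((i.1 + 1 : ℤ) - ((π i).1 + 1))).card
      = (∑ i : Fin n, if i.1 % 2 = 0 ∧ ¬ (π i).1 % 2 = 0 then 1 else 0)
      + (∑ i : Fin n, if ¬ i.1 % 2 = 0 ∧ (π i).1 % 2 = 0 then 1 else 0) := by
    rw [Finset.card_filter, ← Finset.sum_add_distrib]
    refine Finset.sum_congr rfl fun i _ => ?_
    simp only [Int.odd_iff]
    split_ifs <;> omega
  omega
end
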